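/- arXiv:2302.09946 — 2 statements merged into one kernel-verified Lean document; each statement's English description precedes it below -/
import Mathlib

section
/- Let h : ℝ × ℝ^d → ℝ be continuously differentiable with bounded partial derivatives. Then the Stein solution f_h admits the alternative representation f_h(x,y) = −∫₀¹ (2√t)⁻¹ · E[∂_x h(√t·x + √(1−t)·Z, y)] dt for all x ∈ ℝ and y ∈ ℝ^d. -/
open MeasureTheory ProbabilityTheory

/-- The Stein solution `f_h` associated to `h : ℝ × ℝ^d → ℝ`:
`f_h(x,y) = −(1/σ²) ∫₀¹ (2√(t(1−t)))⁻¹ ⬝ E[Z ⬝ h(√t x + √(1−t) Z, y)] dt`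
where `Z ~ N(0, σ²)`. -/
noncomputable def steinSol {d : ℕ} (σ : ℝ)
    (h : ℝ × EuclideanSpace ℝ (Fin d) → ℝ)
    (x : ℝ) (y : EuclideanSpace ℝ (Fin d)) : ℝ :=
  -(1 / σ ^ 2) * ∫ t in (0:ℝ)..1, (2 * Real.sqrt (t * (1 - t)))⁻¹ *
    ∫ z, z * h (Real.sqrt t * x + Real.sqrt (1 - t) * z, y)
      ∂(gaussianReal 0 ⟨σ ^ 2, sq_nonneg σ⟩)

/-! For fixed `t ∈ (0, 1)`, Stein's lemma `E[Z g(Z)] = σ² E[g'(Z)]` for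
`g z = h(√t x + √(1−t) z, y)` turns `E[Z h(√t x + √(1−t) Z, y)]` into
`σ² √(1−t) E[∂ₓh(√t x + √(1−t) Z, y)]`, and the factors `σ²` and `√(1−t)` cancel against the
kernel `σ⁻² (2√(t(1−t)))⁻¹`. Stein's lemma itself is integration by parts against the Gaussian
density `φ`, whose derivative is `-(x/σ²) φ`; a bounded derivative gives `g` linear growth, which
makes every term integrable. -/

open Real
open scoped NNReal

namespace ProbabilityTheory

variable {μ : ℝ} {v : ℝ≥0}

lemma integrable_gaussianReal_iff_integrable_pdf_mul (hv : v ≠ 0) {f : ℝ → ℝ} :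
    Integrable f (gaussianReal μ v) ↔ Integrable (fun x ↦ gaussianPDFReal μ v x * f x) := by
  rw [gaussianReal_of_var_ne_zero _ hv, integrable_withDensity_iff_integrable_smul'
    (measurable_gaussianPDF μ v) (ae_of_all _ fun _ ↦ gaussianPDF_lt_top)]
  simp [toReal_gaussianPDF]

lemma hasDerivAt_gaussianPDFReal (hv : v ≠ 0) (x : ℝ) :
    HasDerivAt (gaussianPDFReal μ v) (-((x - μ) / v) * gaussianPDFReal μ v x) x := by
  have hv' : (v : ℝ) ≠ 0 := by exact_mod_cast hv
  have hexponent : HasDerivAt (fun x ↦ -(x - μ) ^ 2 / (2 * (v : ℝ))) (-((x - μ) / v)) x :=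
    ((((hasDerivAt_id x).sub_const μ).pow 2).neg.div_const (2 * (v : ℝ))).congr_deriv
      (by field_simp; simp)
  exact (hexponent.exp.const_mul (√(2 * π * v))⁻¹).congr_deriv (by rw [gaussianPDFReal]; ring)

lemma memLp_two_gaussianReal_of_norm_deriv_le {g : ℝ → ℝ} (hg : Differentiable ℝ g) {C : ℝ}
    (hC : ∀ x, ‖deriv g x‖ ≤ C) : MemLp g 2 (gaussianReal μ v) := by
  have hgrowth : ∀ x, ‖g x‖ ≤ ‖‖g 0‖ + C * ‖x‖‖ := fun x ↦ by
    have := convex_univ.norm_image_sub_le_of_norm_deriv_le (fun x _ ↦ hg x) (fun x _ ↦ hC x)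
      (Set.mem_univ 0) (Set.mem_univ x)
    rw [sub_zero] at this
    linarith [norm_sub_norm_le (g x) (g 0), Real.le_norm_self (‖g 0‖ + C * ‖x‖)]
  have hid : MemLp id 2 (gaussianReal μ v) := by exact_mod_cast memLp_id_gaussianReal 2
  have hdom : MemLp (fun x ↦ ‖g 0‖ + C * ‖x‖) 2 (gaussianReal μ v) :=
    (memLp_const ‖g 0‖).add (hid.norm.const_mul C)
  exact hdom.of_le hg.continuous.aestronglyMeasurable (ae_of_all _ hgrowth)

/-- **Stein's lemma**. -/
theorem integral_sub_mul_gaussianReal_eq_mul_integral_deriv {g : ℝ → ℝ}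
    (hg : Differentiable ℝ g) {C : ℝ} (hC : ∀ x, ‖deriv g x‖ ≤ C) :
    ∫ x, (x - μ) * g x ∂gaussianReal μ v = v * ∫ x, deriv g x ∂gaussianReal μ v := by
  rcases eq_or_ne v 0 with rfl | hv
  · simp [gaussianReal_zero_var]
  have hg2 : MemLp g 2 (gaussianReal μ v) := memLp_two_gaussianReal_of_norm_deriv_le hg hC
  have hid : MemLp (fun x ↦ x - μ) 2 (gaussianReal μ v) :=
    (show MemLp id 2 (gaussianReal μ v) by exact_mod_cast memLp_id_gaussianReal 2).sub
      (memLp_const μ)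
  have hxg : Integrable (fun x ↦ (x - μ) * g x) (gaussianReal μ v) := hid.integrable_mul hg2
  have hg1 : Integrable g (gaussianReal μ v) := hg2.integrable one_le_two
  have hg' : Integrable (deriv g) (gaussianReal μ v) :=
    .of_bound (measurable_deriv g).aestronglyMeasurable C (ae_of_all _ hC)
  rw [integrable_gaussianReal_iff_integrable_pdf_mul hv] at hxg hg1 hg'
  set φ := gaussianPDFReal μ v
  have hψ : ∀ x, HasDerivAt (fun x ↦ -(v : ℝ) * φ x) ((x - μ) * φ x) x := fun x ↦
    ((hasDerivAt_gaussianPDFReal hv x).const_mul _).congr_deriv (by field_simp; rfl)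
  have ibp := integral_mul_deriv_eq_deriv_mul_of_integrable (fun x _ ↦ (hg x).hasDerivAt)
    (fun x _ ↦ hψ x) (hxg.congr (ae_of_all _ fun x ↦ by simp only [Pi.mul_apply]; ring))
    ((hg'.const_mul (-(v : ℝ))).congr (ae_of_all _ fun x ↦ by simp only [Pi.mul_apply]; ring))
    ((hg1.const_mul (-(v : ℝ))).congr (ae_of_all _ fun x ↦ by simp only [Pi.mul_apply]; ring))
  simp only [integral_gaussianReal_eq_integral_smul hv, smul_eq_mul]
  calc ∫ x, φ x * ((x - μ) * g x) = ∫ x, g x * ((x - μ) * φ x) := by congr 1; ext x; ring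
    _ = -∫ x, deriv g x * (-(v : ℝ) * φ x) := ibp
    _ = v * ∫ x, φ x * deriv g x := by
      rw [← integral_neg, ← integral_const_mul]; congr 1; ext x; ring

lemma integral_mul_comp_affine_gaussianReal {H : ℝ → ℝ} (hH : Differentiable ℝ H) {C : ℝ}
    (hC : ∀ x, ‖deriv H x‖ ≤ C) (a b : ℝ) :
    ∫ z, z * H (a + b * z) ∂gaussianReal 0 v
      = v * b * ∫ z, deriv H (a + b * z) ∂gaussianReal 0 v := by
  have hderiv : ∀ z, HasDerivAt (fun z ↦ H (a + b * z)) (b * deriv H (a + b * z)) z := fun z ↦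
    ((hH _).hasDerivAt.comp z (((hasDerivAt_id z).const_mul b).const_add a)).congr_deriv
      (by simp [mul_comm])
  have hg : Differentiable ℝ fun z ↦ H (a + b * z) := fun z ↦ (hderiv z).differentiableAt
  have hbound : ∀ z, ‖deriv (fun z ↦ H (a + b * z)) z‖ ≤ ‖b‖ * C := fun z ↦ by
    rw [(hderiv z).deriv, norm_mul]
    exact mul_le_mul_of_nonneg_left (hC _) (norm_nonneg b)
  simpa [(hderiv _).deriv, integral_const_mul, mul_assoc]
    using integral_sub_mul_gaussianReal_eq_mul_integral_deriv (μ := 0) (v := v) hg hbound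

end ProbabilityTheory

lemma norm_deriv_comp_prodMk_le {𝕜 F G : Type*} [NontriviallyNormedField 𝕜]
    [NormedAddCommGroup F] [NormedSpace 𝕜 F] [NormedAddCommGroup G] [NormedSpace 𝕜 G]
    {h : 𝕜 × F → G} {s : 𝕜} {y : F} (hh : DifferentiableAt 𝕜 h (s, y)) :
    ‖deriv (fun s ↦ h (s, y)) s‖ ≤ ‖fderiv 𝕜 h (s, y)‖ := by
  have hderiv : HasDerivAt (fun s ↦ h (s, y)) (fderiv 𝕜 h (s, y) (1, 0)) s := by
    exact (hh.hasFDerivAt.comp s (hasFDerivAt_prodMk_left s y)).hasDerivAt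
  rw [hderiv.deriv]
  simpa using (fderiv 𝕜 h (s, y)).le_opNorm (1, 0)

theorem stmt4_general {d : ℕ} (σ : ℝ) (hσ : 0 < σ)
    (h : ℝ × EuclideanSpace ℝ (Fin d) → ℝ)
    (hh : ContDiff ℝ 1 h)
    (hhB : ∃ C : ℝ, ∀ p, ‖fderiv ℝ h p‖ ≤ C) :
    ∀ (x : ℝ) (y : EuclideanSpace ℝ (Fin d)),
      steinSol σ h x y
        = -∫ t in (0:ℝ)..1, (2 * Real.sqrt t)⁻¹ *
            ∫ z, deriv (fun s => h (s, y)) (Real.sqrt t * x + Real.sqrt (1 - t) * z)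
              ∂(gaussianReal 0 ⟨σ ^ 2, sq_nonneg σ⟩) := by
  obtain ⟨C, hC⟩ := hhB
  intro x y
  have hdiff := hh.differentiable one_ne_zero
  have hH : Differentiable ℝ fun s ↦ h (s, y) :=
    hdiff.comp (differentiable_id.prodMk (differentiable_const y))
  have hH' : ∀ s, ‖deriv (fun s ↦ h (s, y)) s‖ ≤ C := fun s ↦
    (norm_deriv_comp_prodMk_le (hdiff _)).trans (hC _)
  -- at `t = 1` the two integrands differ (the left one is `0` since `0⁻¹ = 0`): drop that endpoint
  rw [steinSol, neg_mul, ← intervalIntegral.integral_const_mul, neg_inj,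
    intervalIntegral.integral_of_le zero_le_one, intervalIntegral.integral_of_le zero_le_one,
    integral_Ioc_eq_integral_Ioo, integral_Ioc_eq_integral_Ioo]
  refine setIntegral_congr_fun measurableSet_Ioo fun t ⟨ht0, ht1⟩ ↦ ?_
  have hs0 : √t ≠ 0 := (Real.sqrt_pos.2 ht0).ne'
  have hs1 : √(1 - t) ≠ 0 := (Real.sqrt_pos.2 (sub_pos.2 ht1)).ne'
  rw [integral_mul_comp_affine_gaussianReal (v := ⟨σ ^ 2, sq_nonneg σ⟩) hH hH' (√t * x) (√(1 - t)),
    Real.sqrt_mul ht0.le]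
  dsimp only [NNReal.toReal]
  field_simp

/-- The Stein solution admits the alternative representation
`f_h(x,y) = −∫₀¹ (2√t)⁻¹ ⬝ E[∂_x h(√t x + √(1−t) Z, y)] dt`. -/
theorem stmt4 {d : ℕ} (hd : 1 ≤ d) (σ : ℝ) (hσ : 0 < σ)
    (h : ℝ × EuclideanSpace ℝ (Fin d) → ℝ)
    (hh : ContDiff ℝ 1 h)
    (hhB : ∃ C : ℝ, ∀ p, ‖fderiv ℝ h p‖ ≤ C) :
    ∀ (x : ℝ) (y : EuclideanSpace ℝ (Fin d)),
      steinSol σ h x y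
        = -∫ t in (0:ℝ)..1, (2 * Real.sqrt t)⁻¹ *
            ∫ z, deriv (fun s => h (s, y)) (Real.sqrt t * x + Real.sqrt (1 - t) * z)
              ∂(gaussianReal 0 ⟨σ ^ 2, sq_nonneg σ⟩) :=
  stmt4_general σ hσ h hh hhB
end

section
/- Let (T,ν) be a σ-finite measure space, let 2 ≤ p < q be integers, let f ∈ L²(ν^{⊗p}) be symmetric and let h₁,…,h_q ∈ L²(ν). Then ‖f ⊗_p (h₁ ⊗̃ ⋯ ⊗̃ h_q)‖_{L²(T^{q−p})} ≤ (∏_{j=1}^q ‖h_j‖_{L²(T)}) · √(‖f ⊗_{p−1} f‖_{L²(T²)}), where h₁ ⊗̃ ⋯ ⊗̃ h_q is the symmetrization of the tensor product h₁ ⊗ ⋯ ⊗ h_q, i.e. (h₁ ⊗̃ ⋯ ⊗̃ h_q)(t₁,…,t_q) = (1/q!) Σ_{σ ∈ S_q} h_{σ(1)}(t₁)⋯h_{σ(q)}(t_q). -/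
open MeasureTheory

/-- The way the first `r` coordinates (integration variables `u`) and the remaining `p − r`
coordinates (the first block of the free variables `t`) are combined into an argument of a
function on `T^p`, when forming the contraction `f ⊗_r g` with `f` on `T^p`, `g` on `T^q`. -/
def glueLeft {T : Type*} (p q r : ℕ) (hrp : r ≤ p) (hrq : r ≤ q)
    (u : Fin r → T) (t : Fin (p + q - 2 * r) → T) : Fin p → T :=
  fun i => if h : (i : ℕ) < r then u ⟨i, h⟩
    else t ⟨(i : ℕ) - r, by have := i.isLt; omega⟩

/-- The way the first `r` coordinates (integration variables `u`) and the last `q − r`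
coordinates (the second block of the free variables `t`) are combined into an argument of a
function on `T^q`, when forming the contraction `f ⊗_r g` with `f` on `T^p`, `g` on `T^q`. -/
def glueRight {T : Type*} (p q r : ℕ) (hrp : r ≤ p) (hrq : r ≤ q)
    (u : Fin r → T) (t : Fin (p + q - 2 * r) → T) : Fin q → T :=
  fun j => if h : (j : ℕ) < r then u ⟨j, h⟩
    else t ⟨(p - r) + ((j : ℕ) - r), by have := j.isLt; omega⟩

/-- The `r`-th contraction `f ⊗_r g` of `f : T^p → ℝ` and `g : T^q → ℝ`:
`(f ⊗_r g)(t₁,…,t_{p+q−2r}) = ∫_{T^r} f(u, t₁,…,t_{p−r}) g(u, t_{p−r+1},…,t_{p+q−2r}) dν^{⊗r}(u)`. -/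
noncomputable def contraction {T : Type*} [MeasurableSpace T] (ν : Measure T)
    (p q r : ℕ) (hrp : r ≤ p) (hrq : r ≤ q)
    (f : (Fin p → T) → ℝ) (g : (Fin q → T) → ℝ) :
    (Fin (p + q - 2 * r) → T) → ℝ :=
  fun t => ∫ u : Fin r → T,
    f (glueLeft p q r hrp hrq u t) * g (glueRight p q r hrp hrq u t)
      ∂(Measure.pi fun _ => ν)

/-- A function on `T^n` is symmetric if it is almost everywhere invariant under permutations
of its arguments. -/
def AESymmetric {T : Type*} [MeasurableSpace T] (ν : Measure T) {n : ℕ}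
    (f : (Fin n → T) → ℝ) : Prop :=
  ∀ σ : Equiv.Perm (Fin n),
    (fun x => f (x ∘ σ)) =ᵐ[Measure.pi fun _ : Fin n => ν] f

/-- The symmetrization `h₁ ⊗̃ ⋯ ⊗̃ h_q` of the tensor product `h₁ ⊗ ⋯ ⊗ h_q`:
`(h₁ ⊗̃ ⋯ ⊗̃ h_q)(t₁,…,t_q) = (1/q!) Σ_{σ ∈ S_q} h_{σ(1)}(t₁) ⋯ h_{σ(q)}(t_q)`. -/
noncomputable def symTensor {T : Type*} (q : ℕ) (h : Fin q → T → ℝ) :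
    (Fin q → T) → ℝ :=
  fun t => (q.factorial : ℝ)⁻¹ * ∑ σ : Equiv.Perm (Fin q), ∏ i, h (σ i) (t i)

/-!
Expanding the symmetrization, `f ⊗_p (h₁ ⊗̃ ⋯ ⊗̃ h_q)` is the average over `σ ∈ S_q` of
`⟨f, h_{σ 1} ⊗ ⋯ ⊗ h_{σ p}⟩ · (h_{σ (p+1)} ⊗ ⋯ ⊗ h_{σ q})`, so it suffices to show
`|⟨f, e₁ ⊗ ⋯ ⊗ e_p⟩| ≤ ∏ ‖e_j‖ · ‖f ⊗_{p-1} f‖^{1/2}`.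
Write `T^p = T^{p-1} × T`, `F(w, a) = f(w, a)`, `E = e₁ ⊗ ⋯ ⊗ e_{p-1}` and `e = e_p`.
Then `⟨F, E ⊗ e⟩ = ⟨E, K⟩` with `K(w) = ∫ F(w, a) e(a) da`, and by Fubini
`‖K‖² = ⟨e ⊗ e, C⟩` with `C(a, b) = ∫ F(w, a) F(w, b) dw = (f ⊗_{p-1} f)(a, b)`.
Two applications of Cauchy–Schwarz give `|⟨F, E ⊗ e⟩| ≤ ‖E‖ ‖K‖ ≤ ‖E‖ ‖e‖ ‖C‖^{1/2}`.
-/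

section L2

variable {α β : Type*} [MeasurableSpace α] [MeasurableSpace β] {μ : Measure α} {κ : Measure β}

theorem eLpNorm_two_sq (f : α → ℝ) : eLpNorm f 2 μ ^ 2 = ∫⁻ x, ‖f x‖ₑ ^ 2 ∂μ := by
  simpa using eLpNorm_nnreal_pow_eq_lintegral (μ := μ) (f := f) (p := 2) two_ne_zero

theorem eLpNorm_two_sq_eq_ofReal_integral {f : α → ℝ} (hf : MemLp f 2 μ) :
    eLpNorm f 2 μ ^ 2 = ENNReal.ofReal (∫ x, f x ^ 2 ∂μ) := by
  rw [eLpNorm_two_sq, ofReal_integral_eq_lintegral_ofReal hf.integrable_sq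
    (ae_of_all _ fun x => sq_nonneg _)]
  congr 1 with x
  rw [Real.enorm_eq_ofReal_abs, ← ENNReal.ofReal_pow (abs_nonneg _), sq_abs]

theorem lintegral_enorm_mul_le {f g : α → ℝ} (hf : AEStronglyMeasurable f μ)
    (hg : AEStronglyMeasurable g μ) :
    ∫⁻ x, ‖f x * g x‖ₑ ∂μ ≤ eLpNorm f 2 μ * eLpNorm g 2 μ := by
  rw [← eLpNorm_one_eq_lintegral_enorm]
  simpa using eLpNorm_le_eLpNorm_mul_eLpNorm_of_nnnorm (p := 2) (q := 2) (r := 1) hf hg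
    (· * ·) 1 (.of_forall fun x => by simp [nnnorm_mul])

theorem enorm_integral_mul_le {f g : α → ℝ} (hf : AEStronglyMeasurable f μ)
    (hg : AEStronglyMeasurable g μ) :
    ‖∫ x, f x * g x ∂μ‖ₑ ≤ eLpNorm f 2 μ * eLpNorm g 2 μ :=
  (enorm_integral_le_lintegral_enorm _).trans (lintegral_enorm_mul_le hf hg)

theorem eLpNorm_two_mul_prod [SFinite κ] {f : α → ℝ} {g : β → ℝ}
    (hf : AEStronglyMeasurable f μ) (hg : AEStronglyMeasurable g κ) :
    eLpNorm (fun x : α × β => f x.1 * g x.2) 2 (μ.prod κ) = eLpNorm f 2 μ * eLpNorm g 2 κ := by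
  refine (ENNReal.pow_right_strictMono two_ne_zero).injective ?_
  simp_rw [mul_pow, eLpNorm_two_sq, enorm_mul, mul_pow]
  exact lintegral_prod_mul (hf.enorm.pow_const 2) (hg.enorm.pow_const 2)

end L2

section Kernel

variable {W A : Type*} [MeasurableSpace W] [MeasurableSpace A] {μ : Measure W} {κ : Measure A}
  {F : W × A → ℝ} {e : A → ℝ}

/-- For `F = f` on `T^{p-1} × T` this is the contraction `f ⊗_{p-1} f`. -/
noncomputable def gramKernel (μ : Measure W) (F : W × A → ℝ) (ab : A × A) : ℝ :=
  ∫ w, F (w, ab.1) * F (w, ab.2) ∂μ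

theorem measurable_gramKernel [SFinite μ] (hF : Measurable F) : Measurable (gramKernel μ F) := by
  have hprod : StronglyMeasurable fun x : (A × A) × W => F (x.2, x.1.1) * F (x.2, x.1.2) := by
    apply Measurable.stronglyMeasurable
    fun_prop
  exact hprod.integral_prod_right'.measurable

variable [SFinite κ]

theorem lintegral_eLpNorm_slice_sq (hF : Measurable F) :
    ∫⁻ w, eLpNorm (fun a => F (w, a)) 2 κ ^ 2 ∂μ = eLpNorm F 2 (μ.prod κ) ^ 2 := by
  simp_rw [eLpNorm_two_sq]
  exact (lintegral_prod _ (hF.enorm.pow_const 2).aemeasurable).symm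

theorem lintegral_sq_lintegral_enorm_mul_le (hF : Measurable F) (he : AEStronglyMeasurable e κ) :
    ∫⁻ w, (∫⁻ a, ‖F (w, a) * e a‖ₑ ∂κ) ^ 2 ∂μ ≤ eLpNorm F 2 (μ.prod κ) ^ 2 * eLpNorm e 2 κ ^ 2 := by
  calc _ ≤ ∫⁻ w, eLpNorm (fun a => F (w, a)) 2 κ ^ 2 * eLpNorm e 2 κ ^ 2 ∂μ := by
        refine lintegral_mono fun w => ?_
        rw [← mul_pow]
        exact pow_le_pow_left' (lintegral_enorm_mul_le
          (hF.comp measurable_prodMk_left).aestronglyMeasurable he) 2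
    _ = _ := by
        rw [← lintegral_eLpNorm_slice_sq hF]
        simp_rw [eLpNorm_two_sq]
        exact lintegral_mul_const _ (hF.enorm.pow_const 2).lintegral_prod_right'

theorem memLp_integral_kernel (hF : Measurable F) (hFL : MemLp F 2 (μ.prod κ))
    (he : MemLp e 2 κ) : MemLp (fun w => ∫ a, F (w, a) * e a ∂κ) 2 μ := by
  refine ⟨(hF.aestronglyMeasurable.mul he.1.comp_snd).integral_prod_right', ?_⟩
  have hsq : eLpNorm (fun w => ∫ a, F (w, a) * e a ∂κ) 2 μ ^ 2 < ⊤ := by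
    rw [eLpNorm_two_sq]
    calc _ ≤ ∫⁻ w, (∫⁻ a, ‖F (w, a) * e a‖ₑ ∂κ) ^ 2 ∂μ :=
          lintegral_mono fun w => pow_le_pow_left' (enorm_integral_le_lintegral_enorm _) 2
      _ ≤ eLpNorm F 2 (μ.prod κ) ^ 2 * eLpNorm e 2 κ ^ 2 :=
          lintegral_sq_lintegral_enorm_mul_le hF he.1
      _ < ⊤ := by finiteness [hFL.2, he.2]
  exact lt_top_iff_ne_top.2 (by simpa [ENNReal.pow_eq_top_iff] using hsq.ne)

theorem integral_sq_integral_kernel [SFinite μ] (hF : Measurable F) (hFL : MemLp F 2 (μ.prod κ))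
    (he : MemLp e 2 κ) :
    ∫ w, (∫ a, F (w, a) * e a ∂κ) ^ 2 ∂μ
      = ∫ ab : A × A, e ab.1 * e ab.2 * gramKernel μ F ab ∂(κ.prod κ) := by
  set Φ : W × (A × A) → ℝ := fun x => (F (x.1, x.2.1) * e x.2.1) * (F (x.1, x.2.2) * e x.2.2)
  have hΦm : AEStronglyMeasurable Φ (μ.prod (κ.prod κ)) := by
    have hF₁ : Measurable fun x : W × (A × A) => F (x.1, x.2.1) := by fun_prop
    have hF₂ : Measurable fun x : W × (A × A) => F (x.1, x.2.2) := by fun_prop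
    exact (hF₁.aestronglyMeasurable.mul he.1.comp_fst.comp_snd).mul
      (hF₂.aestronglyMeasurable.mul he.1.comp_snd.comp_snd)
  have hΦ : Integrable Φ (μ.prod (κ.prod κ)) := by
    refine ⟨hΦm, ?_⟩
    have hslice : ∀ w, AEMeasurable (fun a => ‖F (w, a) * e a‖ₑ) κ := fun w =>
      ((hF.comp measurable_prodMk_left).aestronglyMeasurable.mul he.1).enorm
    have hsq : ∀ w, ∫⁻ ab : A × A, ‖Φ (w, ab)‖ₑ ∂(κ.prod κ)
        = (∫⁻ a, ‖F (w, a) * e a‖ₑ ∂κ) ^ 2 := fun w => by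
      rw [sq, ← lintegral_prod_mul (hslice w) (hslice w)]
      simp only [Φ, ← enorm_mul]
    rw [hasFiniteIntegral_iff_enorm, lintegral_prod _ hΦm.enorm]
    simp_rw [hsq]
    exact (lintegral_sq_lintegral_enorm_mul_le hF he.1).trans_lt (by finiteness [hFL.2, he.2])
  calc ∫ w, (∫ a, F (w, a) * e a ∂κ) ^ 2 ∂μ = ∫ w, ∫ ab, Φ (w, ab) ∂(κ.prod κ) ∂μ := by
        congr 1 with w
        rw [sq]
        exact (integral_prod_mul (fun a => F (w, a) * e a) (fun b => F (w, b) * e b)).symm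
    _ = ∫ ab, ∫ w, Φ (w, ab) ∂μ ∂(κ.prod κ) := integral_integral_swap hΦ
    _ = _ := by
        congr 1 with ab
        rw [gramKernel, ← integral_const_mul]
        congr 1 with w
        ring

theorem eLpNorm_integral_kernel_sq_le [SFinite μ] (hF : Measurable F)
    (hFL : MemLp F 2 (μ.prod κ)) (he : MemLp e 2 κ) :
    eLpNorm (fun w => ∫ a, F (w, a) * e a ∂κ) 2 μ ^ 2
      ≤ eLpNorm e 2 κ ^ 2 * eLpNorm (gramKernel μ F) 2 (κ.prod κ) := by
  calc _ = ENNReal.ofReal (∫ w, (∫ a, F (w, a) * e a ∂κ) ^ 2 ∂μ) :=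
        eLpNorm_two_sq_eq_ofReal_integral (memLp_integral_kernel hF hFL he)
    _ ≤ ‖∫ ab : A × A, e ab.1 * e ab.2 * gramKernel μ F ab ∂(κ.prod κ)‖ₑ := by
        rw [integral_sq_integral_kernel hF hFL he]
        exact Real.ofReal_le_enorm _
    _ ≤ eLpNorm (fun ab : A × A => e ab.1 * e ab.2) 2 (κ.prod κ)
          * eLpNorm (gramKernel μ F) 2 (κ.prod κ) :=
        enorm_integral_mul_le (he.1.comp_fst.mul he.1.comp_snd)
          (measurable_gramKernel hF).aestronglyMeasurable
    _ = _ := by rw [eLpNorm_two_mul_prod he.1 he.1, sq]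

theorem enorm_integral_mul_tensor_le [SFinite μ] (hF : Measurable F)
    (hFL : MemLp F 2 (μ.prod κ)) {E : W → ℝ} (hE : MemLp E 2 μ) (he : MemLp e 2 κ) :
    ‖∫ x, F x * (E x.1 * e x.2) ∂(μ.prod κ)‖ₑ
      ≤ eLpNorm E 2 μ * eLpNorm e 2 κ * eLpNorm (gramKernel μ F) 2 (κ.prod κ) ^ (1 / 2 : ℝ) := by
  have hEe : MemLp (fun x : W × A => E x.1 * e x.2) 2 (μ.prod κ) :=
    ⟨hE.1.comp_fst.mul he.1.comp_snd, by
      rw [eLpNorm_two_mul_prod hE.1 he.1]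
      exact ENNReal.mul_lt_top hE.2 he.2⟩
  have hK := memLp_integral_kernel hF hFL he
  have hsplit : ∫ x, F x * (E x.1 * e x.2) ∂(μ.prod κ)
      = ∫ w, E w * ∫ a, F (w, a) * e a ∂κ ∂μ := by
    have hint : Integrable (fun x : W × A => F x * (E x.1 * e x.2)) (μ.prod κ) :=
      hFL.integrable_mul hEe
    rw [integral_prod _ hint]
    congr 1 with w
    rw [← integral_const_mul]
    congr 1 with a
    ring
  have hKle : eLpNorm (fun w => ∫ a, F (w, a) * e a ∂κ) 2 μ
      ≤ eLpNorm e 2 κ * eLpNorm (gramKernel μ F) 2 (κ.prod κ) ^ (1 / 2 : ℝ) := by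
    rw [← ENNReal.pow_le_pow_left_iff two_ne_zero, mul_pow, ← ENNReal.rpow_natCast (_ ^ _),
      ← ENNReal.rpow_mul]
    norm_num
    exact eLpNorm_integral_kernel_sq_le hF hFL he
  rw [hsplit, mul_assoc]
  exact (enorm_integral_mul_le hE.1 hK.1).trans (by gcongr)

end Kernel

theorem Fin.prod_univ_add_of_eq {M : Type*} [CommMonoid M] {a b n : ℕ} (h : a + b = n)
    (φ : Fin n → M) :
    ∏ j, φ j = (∏ i : Fin a, φ (Fin.castLE (by omega) i)) * ∏ i : Fin b, φ ⟨a + i, by omega⟩ := by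
  subst h
  exact Fin.prod_univ_add φ

theorem glueLeft_pred_eq_snoc {T : Type*} {r : ℕ} (h : r ≤ r + 1) (u : Fin r → T)
    (t : Fin (r + 1 + (r + 1) - 2 * r) → T) :
    glueLeft (r + 1) (r + 1) r h h u t = Fin.snoc u (t ⟨0, by omega⟩) := by
  ext j
  simp only [glueLeft, Fin.snoc]
  split_ifs
  · rfl
  · exact congrArg t (Fin.ext (by simp; omega))

theorem glueRight_pred_eq_snoc {T : Type*} {r : ℕ} (h : r ≤ r + 1) (u : Fin r → T)
    (t : Fin (r + 1 + (r + 1) - 2 * r) → T) :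
    glueRight (r + 1) (r + 1) r h h u t = Fin.snoc u (t ⟨1, by omega⟩) := by
  ext j
  simp only [glueRight, Fin.snoc]
  split_ifs
  · rfl
  · exact congrArg t (Fin.ext (by simp; omega))

theorem mul_prod_glue_self {T : Type*} {p q : ℕ} (hpq : p ≤ q) (f : (Fin p → T) → ℝ)
    (g : Fin q → T → ℝ) (u : Fin p → T) (t : Fin (p + q - 2 * p) → T) :
    f (glueLeft p q p le_rfl hpq u t) * ∏ j, g j (glueRight p q p le_rfl hpq u t j)
      = f u * (∏ i : Fin p, g (Fin.castLE hpq i) (u i))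
        * ∏ i : Fin (p + q - 2 * p), g ⟨p + i, by omega⟩ (t i) := by
  have hu : glueLeft p q p le_rfl hpq u t = u := by
    ext i
    simp [glueLeft]
  rw [hu, Fin.prod_univ_add_of_eq (show p + (p + q - 2 * p) = q by omega), mul_assoc]
  congr 3 with i
  · simp [glueRight]
  · simp only [glueRight]
    rw [dif_neg (by simp)]
    exact congrArg _ (congrArg t (Fin.ext (by simp)))

theorem contraction_pi_prod_eq {T : Type*} [MeasurableSpace T] {ν : Measure T} {p q : ℕ}
    (hpq : p ≤ q) (f : (Fin p → T) → ℝ) (g : Fin q → T → ℝ) :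
    contraction ν p q p le_rfl hpq f (fun x => ∏ j, g j (x j))
      = fun t => (∫ u, f u * ∏ i : Fin p, g (Fin.castLE hpq i) (u i) ∂(Measure.pi fun _ => ν))
          * ∏ i : Fin (p + q - 2 * p), g ⟨p + i, by omega⟩ (t i) := by
  ext t
  simp only [contraction, mul_prod_glue_self]
  exact integral_mul_const _ _

section Pi

variable {T : Type*} [MeasurableSpace T] {ν : Measure T} [SigmaFinite ν]

theorem memLp_pi_prod {ι : Type*} [Fintype ι] {g : ι → T → ℝ} (hg : ∀ i, MemLp (g i) 2 ν) :
    MemLp (fun x : ι → T => ∏ i, g i (x i)) 2 (Measure.pi fun _ => ν) := by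
  have hm : AEStronglyMeasurable (fun x : ι → T => ∏ i, g i (x i)) (Measure.pi fun _ => ν) :=
    Finset.aestronglyMeasurable_fun_prod _ fun i _ =>
      (hg i).1.comp_quasiMeasurePreserving (Measure.quasiMeasurePreserving_eval _ i)
  refine (memLp_two_iff_integrable_sq hm).2 ?_
  simp_rw [← Finset.prod_pow]
  exact Integrable.fintype_prod fun i => (hg i).integrable_sq

theorem eLpNorm_pi_prod {ι : Type*} [Fintype ι] {g : ι → T → ℝ} (hg : ∀ i, MemLp (g i) 2 ν) :
    eLpNorm (fun x : ι → T => ∏ i, g i (x i)) 2 (Measure.pi fun _ => ν)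
      = ∏ i, eLpNorm (g i) 2 ν := by
  refine (ENNReal.pow_right_strictMono two_ne_zero).injective ?_
  simp only [← Finset.prod_pow, eLpNorm_two_sq_eq_ofReal_integral (memLp_pi_prod hg),
    eLpNorm_two_sq_eq_ofReal_integral (hg _)]
  rw [integral_fintype_prod_eq_prod (fun i y => g i y ^ 2), ENNReal.ofReal_prod_of_nonneg
    fun i _ => integral_nonneg fun x => sq_nonneg _]

theorem quasiMeasurePreserving_comp_of_injective {ι κ : Type*} [Fintype ι] [Fintype κ]
    {e : κ → ι} (he : Function.Injective e) :
    Measure.QuasiMeasurePreserving (fun x : ι → T => x ∘ e) (Measure.pi fun _ => ν)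
      (Measure.pi fun _ => ν) := by
  classical
  let P : ι → Prop := (· ∈ Set.range e)
  have hsplit := measurePreserving_piEquivPiSubtypeProd (fun _ : ι => ν) P
  -- the `Fintype` instance on the range used by `hsplit`, so that the measures below agree
  let _ : Fintype (Set.range e) := Subtype.fintype P
  have hre := measurePreserving_piCongrLeft (fun _ : κ => ν) (Equiv.ofInjective e he).symm
  convert hre.quasiMeasurePreserving.comp
    (Measure.quasiMeasurePreserving_fst.comp hsplit.quasiMeasurePreserving) using 1
  ext x k
  simp [MeasurableEquiv.coe_piCongrLeft, Equiv.piCongrLeft_apply]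

theorem quasiMeasurePreserving_sumElim_comp {ι κ ι' : Type*} [Fintype ι] [Fintype κ] [Fintype ι']
    {e : ι' → ι ⊕ κ} (he : Function.Injective e) :
    Measure.QuasiMeasurePreserving (fun x : (ι → T) × (κ → T) => Sum.elim x.1 x.2 ∘ e)
      ((Measure.pi fun _ => ν).prod (Measure.pi fun _ => ν)) (Measure.pi fun _ => ν) :=
  (quasiMeasurePreserving_comp_of_injective he).comp
    (measurePreserving_sumPiEquivProdPi_symm fun _ => ν).quasiMeasurePreserving

theorem quasiMeasurePreserving_glueLeft {p q r : ℕ} (hrp : r ≤ p) (hrq : r ≤ q) :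
    Measure.QuasiMeasurePreserving
      (fun x : (Fin (p + q - 2 * r) → T) × (Fin r → T) => glueLeft p q r hrp hrq x.2 x.1)
      ((Measure.pi fun _ => ν).prod (Measure.pi fun _ => ν)) (Measure.pi fun _ => ν) := by
  let e : Fin p → Fin (p + q - 2 * r) ⊕ Fin r := fun i =>
    if h : (i : ℕ) < r then .inr ⟨i, h⟩ else .inl ⟨i - r, by omega⟩
  have he : Function.Injective e := by
    intro i j hij
    simp only [e] at hij
    split_ifs at hij <;> simp [Fin.ext_iff] at hij <;> omega
  have hglue : (fun x : (Fin (p + q - 2 * r) → T) × (Fin r → T) => glueLeft p q r hrp hrq x.2 x.1)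
      = fun x => Sum.elim x.1 x.2 ∘ e := by
    ext x i
    simp only [glueLeft, e, Function.comp_apply]
    split_ifs <;> rfl
  rw [hglue]
  exact quasiMeasurePreserving_sumElim_comp he

theorem quasiMeasurePreserving_glueRight {p q r : ℕ} (hrp : r ≤ p) (hrq : r ≤ q) :
    Measure.QuasiMeasurePreserving
      (fun x : (Fin (p + q - 2 * r) → T) × (Fin r → T) => glueRight p q r hrp hrq x.2 x.1)
      ((Measure.pi fun _ => ν).prod (Measure.pi fun _ => ν)) (Measure.pi fun _ => ν) := by
  let e : Fin q → Fin (p + q - 2 * r) ⊕ Fin r := fun j =>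
    if h : (j : ℕ) < r then .inr ⟨j, h⟩ else .inl ⟨(p - r) + (j - r), by omega⟩
  have he : Function.Injective e := by
    intro i j hij
    simp only [e] at hij
    split_ifs at hij <;> simp [Fin.ext_iff] at hij <;> omega
  have hglue : (fun x : (Fin (p + q - 2 * r) → T) × (Fin r → T) => glueRight p q r hrp hrq x.2 x.1)
      = fun x => Sum.elim x.1 x.2 ∘ e := by
    ext x j
    simp only [glueRight, e, Function.comp_apply]
    split_ifs <;> rfl
  rw [hglue]
  exact quasiMeasurePreserving_sumElim_comp he

theorem contraction_congr_ae {p q r : ℕ} (hrp : r ≤ p) (hrq : r ≤ q)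
    {f f' : (Fin p → T) → ℝ} {g g' : (Fin q → T) → ℝ}
    (hf : f =ᵐ[Measure.pi fun _ => ν] f') (hg : g =ᵐ[Measure.pi fun _ => ν] g') :
    contraction ν p q r hrp hrq f g
      =ᵐ[Measure.pi fun _ => ν] contraction ν p q r hrp hrq f' g' := by
  have h := ((quasiMeasurePreserving_glueLeft hrp hrq).ae_eq hf).mul
    ((quasiMeasurePreserving_glueRight hrp hrq).ae_eq hg)
  filter_upwards [Measure.ae_ae_of_ae_prod h] with t ht
  exact integral_congr_ae ht

theorem measurePreserving_snoc (r : ℕ) :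
    MeasurePreserving (fun x : (Fin r → T) × T => (Fin.snoc x.1 x.2 : Fin (r + 1) → T))
      ((Measure.pi fun _ => ν).prod ν) (Measure.pi fun _ => ν) := by
  convert (measurePreserving_piFinSuccAbove (fun _ : Fin (r + 1) => ν) (Fin.last r)).symm.comp
    (Measure.measurePreserving_swap (μ := Measure.pi fun _ : Fin r => ν) (ν := ν)) using 1
  ext x j
  simp

-- Stated for `m = 2` so that it applies to `Fin (p + p - 2 * (p - 1)) → T`.
theorem measurePreserving_eval_zero_one {m : ℕ} (hm : m = 2) :
    MeasurePreserving (fun t : Fin m → T => (t ⟨0, by omega⟩, t ⟨1, by omega⟩))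
      (Measure.pi fun _ => ν) (ν.prod ν) := by
  subst hm
  exact measurePreserving_finTwoArrow ν

theorem enorm_integral_mul_pi_prod_le_snoc {r : ℕ} {f : (Fin (r + 1) → T) → ℝ} (hf : Measurable f)
    (hfL : MemLp f 2 (Measure.pi fun _ => ν)) {e : Fin (r + 1) → T → ℝ}
    (he : ∀ j, MemLp (e j) 2 ν) :
    ‖∫ u, f u * ∏ j, e j (u j) ∂(Measure.pi fun _ => ν)‖ₑ
      ≤ (∏ j, eLpNorm (e j) 2 ν) * eLpNorm (gramKernel (Measure.pi fun _ => ν)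
          fun x : (Fin r → T) × T => f (Fin.snoc x.1 x.2)) 2 (ν.prod ν) ^ (1 / 2 : ℝ) := by
  have hS := measurePreserving_snoc (ν := ν) r
  have hm : AEStronglyMeasurable (fun u => f u * ∏ j, e j (u j)) (Measure.pi fun _ => ν) :=
    hfL.1.mul (memLp_pi_prod he).1
  rw [← hS.map_eq, integral_map hS.measurable.aemeasurable (hS.map_eq ▸ hm)]
  simp only [Fin.prod_univ_castSucc, Fin.snoc_castSucc, Fin.snoc_last]
  calc _ ≤ eLpNorm (fun w : Fin r → T => ∏ i : Fin r, e i.castSucc (w i)) 2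
          (Measure.pi fun _ => ν) * eLpNorm (e (Fin.last r)) 2 ν
        * eLpNorm (gramKernel (Measure.pi fun _ => ν)
            fun x : (Fin r → T) × T => f (Fin.snoc x.1 x.2)) 2 (ν.prod ν) ^ (1 / 2 : ℝ) :=
        enorm_integral_mul_tensor_le (hf.comp hS.measurable) (hfL.comp_measurePreserving hS)
          (memLp_pi_prod fun i => he _) (he _)
    _ = _ := by rw [eLpNorm_pi_prod fun i => he _]

theorem eLpNorm_contraction_pred_eq {r : ℕ} (h : r ≤ r + 1) {f : (Fin (r + 1) → T) → ℝ}
    (hf : Measurable f) :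
    eLpNorm (contraction ν (r + 1) (r + 1) r h h f f) 2 (Measure.pi fun _ => ν)
      = eLpNorm (gramKernel (Measure.pi fun _ => ν)
          fun x : (Fin r → T) × T => f (Fin.snoc x.1 x.2)) 2 (ν.prod ν) := by
  have hC : Measurable (gramKernel (Measure.pi fun _ => ν)
      fun x : (Fin r → T) × T => f (Fin.snoc x.1 x.2)) :=
    measurable_gramKernel (hf.comp (measurePreserving_snoc (ν := ν) r).measurable)
  rw [← eLpNorm_comp_measurePreserving hC.aestronglyMeasurable
    (measurePreserving_eval_zero_one (m := r + 1 + (r + 1) - 2 * r) (by omega))]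
  refine congrArg (eLpNorm · 2 _) ?_
  ext t
  simp only [contraction, gramKernel, Function.comp_apply, glueLeft_pred_eq_snoc,
    glueRight_pred_eq_snoc]

theorem enorm_integral_mul_pi_prod_le {p r : ℕ} (hr : r + 1 = p) (hrp : r ≤ p)
    {f : (Fin p → T) → ℝ} (hf : Measurable f) (hfL : MemLp f 2 (Measure.pi fun _ => ν))
    {e : Fin p → T → ℝ} (he : ∀ j, MemLp (e j) 2 ν) :
    ‖∫ u, f u * ∏ j, e j (u j) ∂(Measure.pi fun _ => ν)‖ₑ
      ≤ (∏ j, eLpNorm (e j) 2 ν)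
        * eLpNorm (contraction ν p p r hrp hrp f f) 2 (Measure.pi fun _ => ν) ^ (1 / 2 : ℝ) := by
  subst hr
  rw [eLpNorm_contraction_pred_eq hrp hf]
  exact enorm_integral_mul_pi_prod_le_snoc hf hfL he

theorem contraction_symTensor_eq {p q : ℕ} (hpq : p ≤ q) {f : (Fin p → T) → ℝ}
    (hf : MemLp f 2 (Measure.pi fun _ => ν)) {h : Fin q → T → ℝ} (hh : ∀ j, MemLp (h j) 2 ν) :
    contraction ν p q p le_rfl hpq f (symTensor q h)
      = fun t => (q.factorial : ℝ)⁻¹ * ∑ σ : Equiv.Perm (Fin q),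
          contraction ν p q p le_rfl hpq f (fun x => ∏ j, h (σ j) (x j)) t := by
  ext t
  have hint : ∀ σ : Equiv.Perm (Fin q), Integrable (fun u => f (glueLeft p q p le_rfl hpq u t)
      * ∏ j, h (σ j) (glueRight p q p le_rfl hpq u t j)) (Measure.pi fun _ => ν) := fun σ => by
    simp_rw [mul_prod_glue_self]
    exact (hf.integrable_mul (memLp_pi_prod fun i => hh _)).mul_const _
  simp only [contraction, symTensor]
  rw [← integral_finsetSum _ fun σ _ => hint σ, ← integral_const_mul]
  congr 1 with u
  rw [mul_left_comm, Finset.mul_sum]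

theorem eLpNorm_contraction_pi_prod_le {p q : ℕ} (hp : 0 < p) (hpq : p ≤ q)
    {f : (Fin p → T) → ℝ} (hf : Measurable f) (hfL : MemLp f 2 (Measure.pi fun _ => ν))
    {g : Fin q → T → ℝ} (hg : ∀ j, MemLp (g j) 2 ν) :
    eLpNorm (contraction ν p q p le_rfl hpq f (fun x => ∏ j, g j (x j))) 2
        (Measure.pi fun _ => ν)
      ≤ (∏ j, eLpNorm (g j) 2 ν)
        * eLpNorm (contraction ν p p (p - 1) (Nat.sub_le p 1) (Nat.sub_le p 1) f f) 2
            (Measure.pi fun _ => ν) ^ (1 / 2 : ℝ) := by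
  rw [contraction_pi_prod_eq]
  calc _ = ‖∫ u, f u * ∏ i : Fin p, g (Fin.castLE hpq i) (u i) ∂(Measure.pi fun _ => ν)‖ₑ
        * eLpNorm (fun t => ∏ i : Fin (p + q - 2 * p), g ⟨p + i, by omega⟩ (t i)) 2
            (Measure.pi fun _ => ν) :=
        eLpNorm_const_smul _ _ _ _
    _ ≤ ((∏ i : Fin p, eLpNorm (g (Fin.castLE hpq i)) 2 ν)
          * eLpNorm (contraction ν p p (p - 1) (Nat.sub_le p 1) (Nat.sub_le p 1) f f) 2
              (Measure.pi fun _ => ν) ^ (1 / 2 : ℝ))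
          * ∏ i : Fin (p + q - 2 * p), eLpNorm (g ⟨p + i, by omega⟩) 2 ν := by
        rw [eLpNorm_pi_prod fun i => hg _]
        gcongr
        exact enorm_integral_mul_pi_prod_le (by omega) _ hf hfL fun i => hg _
    _ = _ := by
        rw [Fin.prod_univ_add_of_eq (show p + (p + q - 2 * p) = q by omega)
          fun j => eLpNorm (g j) 2 ν]
        ring

theorem eLpNorm_contraction_symTensor_le {p q : ℕ} (hp : 0 < p) (hpq : p ≤ q)
    {f : (Fin p → T) → ℝ} (hf : Measurable f) (hfL : MemLp f 2 (Measure.pi fun _ => ν))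
    {h : Fin q → T → ℝ} (hh : ∀ j, MemLp (h j) 2 ν) :
    eLpNorm (contraction ν p q p le_rfl hpq f (symTensor q h)) 2 (Measure.pi fun _ => ν)
      ≤ (∏ j, eLpNorm (h j) 2 ν)
        * eLpNorm (contraction ν p p (p - 1) (Nat.sub_le p 1) (Nat.sub_le p 1) f f) 2
            (Measure.pi fun _ => ν) ^ (1 / 2 : ℝ) := by
  set K := eLpNorm (contraction ν p p (p - 1) (Nat.sub_le p 1) (Nat.sub_le p 1) f f) 2
    (Measure.pi fun _ => ν) ^ (1 / 2 : ℝ)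
  have hmeas : ∀ σ : Equiv.Perm (Fin q), AEStronglyMeasurable
      (contraction ν p q p le_rfl hpq f fun x => ∏ j, h (σ j) (x j)) (Measure.pi fun _ => ν) := by
    intro σ
    rw [contraction_pi_prod_eq]
    exact aestronglyMeasurable_const.mul (memLp_pi_prod fun i => hh _).1
  rw [contraction_symTensor_eq hpq hfL hh]
  calc _ = ‖(q.factorial : ℝ)⁻¹‖ₑ * eLpNorm (∑ σ : Equiv.Perm (Fin q),
          contraction ν p q p le_rfl hpq f fun x => ∏ j, h (σ j) (x j)) 2
            (Measure.pi fun _ => ν) := by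
        rw [← eLpNorm_const_smul]
        congr 1 with t
        simp
    _ ≤ ‖(q.factorial : ℝ)⁻¹‖ₑ * ∑ _σ : Equiv.Perm (Fin q), (∏ j, eLpNorm (h j) 2 ν) * K := by
        gcongr
        refine (eLpNorm_sum_le (fun σ _ => hmeas σ) one_le_two).trans
          (Finset.sum_le_sum fun σ _ => ?_)
        rw [← Equiv.prod_comp σ fun j => eLpNorm (h j) 2 ν]
        exact eLpNorm_contraction_pi_prod_le hp hpq hf hfL fun j => hh _
    _ = _ := by
        rw [Finset.sum_const, Finset.card_univ, Fintype.card_perm, Fintype.card_fin, nsmul_eq_mul,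
          enorm_inv (by positivity), Real.enorm_natCast, ← mul_assoc,
          ENNReal.inv_mul_cancel (by simp [Nat.factorial_ne_zero]) (by simp), one_mul]

end Pi

theorem stmt13_general {T : Type*} [MeasurableSpace T] (ν : Measure T) [SigmaFinite ν]
    (p q : ℕ) (hp : 2 ≤ p) (hpq : p < q)
    (f : (Fin p → T) → ℝ)
    (hf : MemLp f 2 (Measure.pi fun _ : Fin p => ν))
    (h : Fin q → T → ℝ)
    (hh : ∀ j, MemLp (h j) 2 ν) :
    eLpNorm (contraction ν p q p (le_refl p) hpq.le f (symTensor q h)) 2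
        (Measure.pi fun _ => ν)
      ≤ (∏ j : Fin q, eLpNorm (h j) 2 ν)
        * (eLpNorm
            (contraction ν p p (p - 1) (Nat.sub_le p 1) (Nat.sub_le p 1) f f) 2
            (Measure.pi fun _ => ν)) ^ ((1 : ℝ) / 2) := by
  obtain ⟨f₀, hf₀, hff₀⟩ := hf.1
  rw [eLpNorm_congr_ae (contraction_congr_ae _ _ hff₀ .rfl),
    eLpNorm_congr_ae (contraction_congr_ae _ _ hff₀ hff₀)]
  exact eLpNorm_contraction_symTensor_le (by omega) hpq.le hf₀.measurable (hf.ae_eq hff₀) hh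

/-- For `2 ≤ p < q`, `f ∈ L²(ν^{⊗p})` symmetric and `h₁,…,h_q ∈ L²(ν)`,
`‖f ⊗_p (h₁ ⊗̃ ⋯ ⊗̃ h_q)‖_{L²(T^{q−p})} ≤ (∏_j ‖h_j‖_{L²(T)}) ⬝ √(‖f ⊗_{p−1} f‖_{L²(T²)})`. -/
theorem stmt13 {T : Type*} [MeasurableSpace T] (ν : Measure T) [SigmaFinite ν]
    (p q : ℕ) (hp : 2 ≤ p) (hpq : p < q)
    (f : (Fin p → T) → ℝ)
    (hf : MemLp f 2 (Measure.pi fun _ : Fin p => ν))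
    (hfs : AESymmetric ν f)
    (h : Fin q → T → ℝ)
    (hh : ∀ j, MemLp (h j) 2 ν) :
    eLpNorm (contraction ν p q p (le_refl p) hpq.le f (symTensor q h)) 2
        (Measure.pi fun _ => ν)
      ≤ (∏ j : Fin q, eLpNorm (h j) 2 ν)
        * (eLpNorm
            (contraction ν p p (p - 1) (Nat.sub_le p 1) (Nat.sub_le p 1) f f) 2
            (Measure.pi fun _ => ν)) ^ ((1 : ℝ) / 2) :=
  stmt13_general ν p q hp hpq f hf h hh
end
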